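/- arXiv:2104.14573 — 6 statements merged into one kernel-verified Lean document; each statement's English description precedes it below -/
import Mathlib

section
/- For every α > 0, every u_ℓ, u_r > 0 and every v_ℓ, v_r ∈ ℝ, there exists a unique pair of real numbers (ε₁, ε₂) such that ε₂ − ε₁ = (1/2)·ln(u_ℓ/u_r) and h(ε₁) + h(ε₂) = (v_r − v_ℓ)/(2α). (These ε₁, ε₂ are the strengths of the 1-wave and 2-wave in the unique solution of the Riemann problem for the isothermal p-system ∂_t u − ∂_y v = 0, ∂_t v + ∂_y(α²/u) = 0.) -/
/-!
Writing `ε₂ = ε₁ + d` with `d = (1/2) log (u_ℓ/u_r)`, the second equation becomes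
`h ε₁ + h (ε₁ + d) = c` with `c = (v_r - v_ℓ)/(2α)`. Since `h = min id sinh` is continuous, strictly increasing and
unbounded in both directions, so is `t ↦ h t + h (t + d)`, which therefore takes the value `c`
exactly once.
-/

/-- The function `h` used to parametrize rarefaction (`ε ≥ 0`) and shock (`ε < 0`)
branches of the wave curves of the isothermal p-system. -/
noncomputable def waveH (ε : ℝ) : ℝ := if 0 ≤ ε then ε else Real.sinh ε

open Filter Function

section

variable {f : ℝ → ℝ}

theorem bijective_add_comp_add_const (hmono : StrictMono f) (hcont : Continuous f)
    (htop : Tendsto f atTop atTop) (hbot : Tendsto f atBot atBot) (d : ℝ) :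
    Bijective fun t ↦ f t + f (t + d) := by
  have hshift_mono : StrictMono fun t ↦ f (t + d) := hmono.comp (strictMono_id.add_const d)
  refine ⟨(hmono.add hshift_mono).injective, Continuous.surjective (by fun_prop) ?_ ?_⟩
  · exact htop.atTop_add_atTop (htop.comp (tendsto_atTop_add_const_right _ d tendsto_id))
  · exact hbot.atBot_add_atBot (hbot.comp (tendsto_atBot_add_const_right _ d tendsto_id))

theorem existsUnique_sub_eq_and_add_eq (hmono : StrictMono f) (hcont : Continuous f)
    (htop : Tendsto f atTop atTop) (hbot : Tendsto f atBot atBot) (d c : ℝ) :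
    ∃! p : ℝ × ℝ, p.2 - p.1 = d ∧ f p.1 + f p.2 = c := by
  obtain ⟨t, ht, huniq⟩ :=
    (bijective_add_comp_add_const hmono hcont htop hbot d).existsUnique c
  refine ⟨(t, t + d), ⟨add_sub_cancel_left t d, ht⟩, ?_⟩
  rintro ⟨a, b⟩ ⟨hdiff, hsum⟩
  obtain rfl : b = a + d := eq_add_of_sub_eq' hdiff
  obtain rfl : a = t := huniq a hsum
  rfl

end

theorem waveH_eq_min (ε : ℝ) : waveH ε = min ε (Real.sinh ε) := by
  unfold waveH
  split_ifs with h
  · exact (min_eq_left (Real.self_le_sinh_iff.2 h)).symm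
  · exact (min_eq_right (Real.sinh_le_self_iff.2 (le_of_not_ge h))).symm

theorem waveH_strictMono : StrictMono waveH := fun a b hab ↦ by
  simpa only [waveH_eq_min] using min_lt_min hab (Real.sinh_strictMono hab)

theorem waveH_continuous : Continuous waveH := by
  rw [funext waveH_eq_min]
  exact continuous_id.min Real.continuous_sinh

theorem tendsto_waveH_atTop : Tendsto waveH atTop atTop :=
  tendsto_id.congr' <| (eventually_ge_atTop 0).mono fun ε hε ↦ by simp [waveH, hε]

theorem tendsto_waveH_atBot : Tendsto waveH atBot atBot :=
  tendsto_atBot_mono (fun ε ↦ (waveH_eq_min ε).trans_le (min_le_left _ _)) tendsto_id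

theorem riemann_problem_unique_strengths_general
    (α uℓ ur : ℝ) (vℓ vr : ℝ) :
    ∃! ε : ℝ × ℝ,
      ε.2 - ε.1 = (1/2) * Real.log (uℓ / ur) ∧
      waveH ε.1 + waveH ε.2 = (vr - vℓ) / (2 * α) :=
  existsUnique_sub_eq_and_add_eq waveH_strictMono waveH_continuous tendsto_waveH_atTop
    tendsto_waveH_atBot _ _

/-- For every `α > 0`, `u_ℓ, u_r > 0` and `v_ℓ, v_r ∈ ℝ`, there is a
unique pair `(ε₁, ε₂)` with `ε₂ - ε₁ = (1/2)·log(u_ℓ/u_r)` and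
`h(ε₁) + h(ε₂) = (v_r - v_ℓ)/(2α)` (the wave strengths of the Riemann solution). -/
theorem riemann_problem_unique_strengths
    (α uℓ ur : ℝ) (hα : 0 < α) (huℓ : 0 < uℓ) (hur : 0 < ur) (vℓ vr : ℝ) :
    ∃! ε : ℝ × ℝ,
      ε.2 - ε.1 = (1/2) * Real.log (uℓ / ur) ∧
      waveH ε.1 + waveH ε.2 = (vr - vℓ) / (2 * α) :=
  riemann_problem_unique_strengths_general α uℓ ur vℓ vr
end

section
/- For all real numbers ε₁ and ε₂, one has |ε₁| + |ε₂| ≤ max{ |ε₂ − ε₁| , |h(ε₁) + h(ε₂)| }. -/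
lemma sinh_le_self_of_neg {x : ℝ} (hx : x < 0) : Real.sinh x ≤ x := by
  exact Real.sinh_le_self_iff.2 hx.le

/-- `|ε₁| + |ε₂| ≤ max { |ε₂ - ε₁| , |h(ε₁) + h(ε₂)| }`. -/
theorem total_strength_bound (ε₁ ε₂ : ℝ) :
    |ε₁| + |ε₂| ≤ max |ε₂ - ε₁| |waveH ε₁ + waveH ε₂| := by
  unfold waveH
  rcases le_or_gt 0 ε₁ with h1 | h1 <;> rcases le_or_gt 0 ε₂ with h2 | h2
  · refine le_max_of_le_right ?_
    rw [if_pos h1, if_pos h2, abs_of_nonneg h1, abs_of_nonneg h2,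
      abs_of_nonneg (by linarith)]
  · refine le_max_of_le_left ?_
    rw [abs_of_nonneg h1, abs_of_neg h2, abs_of_nonpos (by linarith)]
    linarith
  · refine le_max_of_le_left ?_
    rw [abs_of_neg h1, abs_of_nonneg h2, abs_of_nonneg (by linarith)]
    linarith
  · refine le_max_of_le_right ?_
    have s1 := sinh_le_self_of_neg h1
    have s2 := sinh_le_self_of_neg h2
    rw [if_neg (not_le.2 h1), if_neg (not_le.2 h2), abs_of_neg h1, abs_of_neg h2,
      abs_of_nonpos (by linarith)]
    linarith
end

section
/- Let q > 0, M > 0, 0 < s < 1/M, and 0 < x ≤ q. If y ∈ ℝ satisfies h(y) + h(x + y) = h(x)·(1 − M s), then (M s x)/(1 + cosh q) ≤ |y| ≤ (M s x)/2. -/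
/-- `sinh t ≤ t * cosh t` for `t ≥ 0`. -/
lemma sinh_le_mul_cosh {t : ℝ} (ht : 0 ≤ t) : Real.sinh t ≤ t * Real.cosh t := by
  have key : MonotoneOn (fun u : ℝ => u * Real.cosh u - Real.sinh u) (Set.Ici 0) := by
    have hd : ∀ u : ℝ, HasDerivAt (fun u : ℝ => u * Real.cosh u - Real.sinh u)
        (1 * Real.cosh u + u * Real.sinh u - Real.cosh u) u := fun u =>
      ((hasDerivAt_id u).mul (Real.hasDerivAt_cosh u)).sub (Real.hasDerivAt_sinh u)
    apply monotoneOn_of_deriv_nonneg (convex_Ici 0)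
    · exact (Continuous.sub (continuous_id.mul Real.continuous_cosh)
        Real.continuous_sinh).continuousOn
    · intro u _
      exact ((hd u).differentiableAt).differentiableWithinAt
    · intro u hu
      rw [(hd u).deriv]
      have hu' : 0 < u := by simpa using hu
      nlinarith [Real.sinh_pos_iff.2 hu']
  have h0 : (0 : ℝ) * Real.cosh 0 - Real.sinh 0 ≤ t * Real.cosh t - Real.sinh t :=
    key (Set.self_mem_Ici) ht ht
  simp at h0
  linarith

/-- size of the wave reflected at a time step from an incoming
rarefaction of strength `0 < x ≤ q`:
`(M s x)/(1 + cosh q) ≤ |y| ≤ (M s x)/2`. -/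
theorem reflected_wave_estimate_rarefaction (q M s x y : ℝ) (hq : 0 < q)
    (hM : 0 < M) (hs : 0 < s) (hs' : s < 1 / M) (hx : 0 < x) (hxq : x ≤ q)
    (hy : waveH y + waveH (x + y) = waveH x * (1 - M * s)) :
    M * s * x / (1 + Real.cosh q) ≤ |y| ∧ |y| ≤ M * s * x / 2 := by
  have hMs : 0 < M * s := mul_pos hM hs
  have hMs1 : M * s < 1 := by
    have := (lt_div_iff₀ hM).mp hs'
    nlinarith
  have hwx : waveH x = x := by simp [waveH, hx.le]
  -- y < 0
  have hyneg : y < 0 := by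
    by_contra h
    push_neg at h
    have hxy : 0 ≤ x + y := by linarith
    rw [hwx] at hy
    simp only [waveH, if_pos h, if_pos hxy] at hy
    nlinarith
  -- x + y ≥ 0
  have hxy : 0 ≤ x + y := by
    by_contra h
    push_neg at h
    rw [hwx] at hy
    simp only [waveH, if_neg (not_le.2 hyneg), if_neg (not_le.2 h)] at hy
    have h1 : Real.sinh y < 0 := Real.sinh_neg_iff.2 hyneg
    have h2 : Real.sinh (x + y) < 0 := Real.sinh_neg_iff.2 h
    nlinarith
  rw [hwx] at hy
  simp only [waveH, if_neg (not_le.2 hyneg), if_pos hxy] at hy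
  -- key equation: sinh y + (x + y) = x (1 - M s), i.e. sinh(-y) + (-y) = M s x
  set t := -y with htdef
  have ht0 : 0 < t := by simp [htdef]; linarith
  have htx : t ≤ x := by simp [htdef] at *; linarith
  have hteq : Real.sinh t + t = M * s * x := by
    have : Real.sinh t = -Real.sinh y := by rw [htdef, Real.sinh_neg]
    rw [this]; nlinarith
  have habs : |y| = t := by rw [abs_of_neg hyneg]
  rw [habs]
  constructor
  · -- lower bound: sinh t ≤ t cosh t ≤ t cosh q
    have h1 : Real.sinh t ≤ t * Real.cosh t := sinh_le_mul_cosh ht0.le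
    have h2 : Real.cosh t ≤ Real.cosh q := by
      rw [Real.cosh_le_cosh, abs_of_pos ht0, abs_of_pos hq]; linarith
    have hcq : 0 < 1 + Real.cosh q := by positivity
    rw [div_le_iff₀ hcq]
    nlinarith
  · -- upper bound: t ≤ sinh t
    have h1 : t ≤ Real.sinh t := Real.self_le_sinh_iff.2 ht0.le
    linarith
end

section
/- Let q > 0, M > 0, 0 < s < 1/M, and −q ≤ x < 0. If y ∈ ℝ satisfies h(y) + h(x + y) = h(x)·(1 − M s), then (M s |x|)/(1 + cosh q) ≤ |y| ≤ (cosh(q)/2)·M s |x|. -/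
/-- size of the wave reflected at a time step from an incoming
shock of strength `-q ≤ x < 0`:
`(M s |x|)/(1 + cosh q) ≤ |y| ≤ (cosh(q)/2)·M s |x|`. -/
theorem reflected_wave_estimate_shock (q M s x y : ℝ) (hq : 0 < q)
    (hM : 0 < M) (hs : 0 < s) (hs' : s < 1 / M) (hx : x < 0) (hxq : -q ≤ x)
    (hy : waveH y + waveH (x + y) = waveH x * (1 - M * s)) :
    M * s * |x| / (1 + Real.cosh q) ≤ |y| ∧
    |y| ≤ (Real.cosh q / 2) * (M * s * |x|) := by
  have hMs : 0 < M * s := mul_pos hM hs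
  have hMs1 : M * s < 1 := by
    have := (lt_div_iff₀ hM).mp hs'
    linarith [this]
  have hsx : Real.sinh x < 0 := Real.sinh_neg_iff.mpr hx
  have hwx : waveH x = Real.sinh x := by
    simp [waveH, not_le.mpr hx]
  -- y > 0
  have hy0 : 0 < y := by
    by_contra hyn
    push_neg at hyn
    have h1 : waveH y ≤ 0 := by
      rcases lt_or_eq_of_le hyn with h | h
      · simp only [waveH, not_le.mpr h, if_neg, not_false_iff]
        exact (Real.sinh_neg_iff.mpr h).le
      · simp [waveH, h]
    have h2 : waveH (x + y) ≤ Real.sinh x := by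
      have hxy : x + y < 0 := by linarith
      simp only [waveH, not_le.mpr hxy, if_neg]
      exact Real.sinh_le_sinh.mpr (by linarith)
    have h3 : Real.sinh x < Real.sinh x * (1 - M * s) := by nlinarith
    rw [hwx] at hy
    linarith
  -- x + y < 0
  have hxy0 : x + y < 0 := by
    by_contra hn
    push_neg at hn
    have h1 : waveH (x + y) = x + y := by simp [waveH, hn]
    have h2 : waveH y = y := by simp [waveH, hy0.le]
    have hy' : -x ≤ y := by linarith
    rw [hwx, h1, h2] at hy
    nlinarith
  have h2 : waveH y = y := by simp [waveH, hy0.le]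
  have h1 : waveH (x + y) = Real.sinh (x + y) := by simp [waveH, not_le.mpr hxy0]
  rw [hwx, h1, h2] at hy
  -- MVT on [x, x+y]
  obtain ⟨c, hc, hceq⟩ := exists_hasDerivAt_eq_slope Real.sinh Real.cosh
    (show x < x + y by linarith) Real.continuous_sinh.continuousOn
    (fun t _ => Real.hasDerivAt_sinh t)
  have hceq' : Real.sinh (x + y) - Real.sinh x = y * Real.cosh c := by
    have : Real.cosh c = (Real.sinh (x + y) - Real.sinh x) / y := by
      simpa using hceq
    field_simp at this
    linarith
  have hc1 : 1 ≤ Real.cosh c := Real.one_le_cosh c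
  have hcq : Real.cosh c ≤ Real.cosh q := by
    rw [Real.cosh_le_cosh]
    rw [abs_of_nonpos (by linarith [hc.2] : c ≤ 0), abs_of_pos hq]
    linarith [hc.1]
  -- MVT on [x, 0] : -sinh x = -x * cosh c'
  obtain ⟨d, hd, hdeq⟩ := exists_hasDerivAt_eq_slope Real.sinh Real.cosh
    hx Real.continuous_sinh.continuousOn (fun t _ => Real.hasDerivAt_sinh t)
  have hxne : x ≠ 0 := ne_of_lt hx
  have hdeq' : -Real.sinh x = -x * Real.cosh d := by
    rw [hdeq, Real.sinh_zero]
    field_simp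
    ring
  have hdq : Real.cosh d ≤ Real.cosh q := by
    rw [Real.cosh_le_cosh]
    rw [abs_of_nonpos (by linarith [hd.2] : d ≤ 0), abs_of_pos hq]
    linarith [hd.1]
  have hxsinh : -x ≤ -Real.sinh x := by
    have := Real.self_lt_sinh_iff.mpr (show (0:ℝ) < -x by linarith)
    rw [Real.sinh_neg] at this
    linarith
  -- key identity: y * (1 + cosh c) = M * s * (-sinh x)
  have hkey : y * (1 + Real.cosh c) = M * s * (-Real.sinh x) := by nlinarith [hceq']
  rw [abs_of_neg hx, abs_of_pos hy0]
  have hq1 : (0:ℝ) < 1 + Real.cosh q := by positivity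
  constructor
  · rw [div_le_iff₀ hq1]
    nlinarith [hy0, hc1, hcq, hxsinh, hMs]
  · have h2y : 2 * y ≤ M * s * (-Real.sinh x) := by nlinarith [hkey, hc1, hy0]
    have he1 : M * s * (-Real.sinh x) = M * s * (-x) * Real.cosh d := by
      rw [hdeq']; ring
    have he2 : M * s * (-x) * Real.cosh d ≤ M * s * (-x) * Real.cosh q :=
      mul_le_mul_of_nonneg_left hdq (by nlinarith)
    linarith
end

section
/- Let α < 0 and β < 0, and suppose ε₁, ε₂ ∈ ℝ satisfy ε₂ − ε₁ = α + β and h(ε₁) + h(ε₂) = h(α) + h(β). Then ε₂ < 0 < ε₁ (the resulting wave of the same family is a shock and the reflected wave is a rarefaction), and max{|α|, |β|} < |ε₂| < |α| + |β|. -/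
/-- interaction of two shocks (`α < 0`, `β < 0`): the transmitted
wave `ε₂` is a shock with `max{|α|,|β|} < |ε₂| < |α| + |β|` and the reflected
wave `ε₁` is a rarefaction. -/
theorem shock_shock_interaction (α β ε₁ ε₂ : ℝ) (hα : α < 0) (hβ : β < 0)
    (h1 : ε₂ - ε₁ = α + β)
    (h2 : waveH ε₁ + waveH ε₂ = waveH α + waveH β) :
    ε₂ < 0 ∧ 0 < ε₁ ∧ max |α| |β| < |ε₂| ∧ |ε₂| < |α| + |β| := by
  have wneg : ∀ x : ℝ, x ≤ 0 → waveH x = Real.sinh x := by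
    intro x hx
    unfold waveH
    split_ifs with h
    · have : x = 0 := le_antisymm hx h
      simp [this]
    · rfl
  have hwα : waveH α = Real.sinh α := wneg α hα.le
  have hwβ : waveH β = Real.sinh β := wneg β hβ.le
  have hsα : Real.sinh α < 0 := by
    rw [← Real.sinh_zero]; exact Real.sinh_lt_sinh.2 hα
  have hsβ : Real.sinh β < 0 := by
    rw [← Real.sinh_zero]; exact Real.sinh_lt_sinh.2 hβ
  -- key superadditivity: sinh (α+β) < sinh α + sinh β
  have key : Real.sinh (α + β) < Real.sinh α + Real.sinh β := by
    rw [Real.sinh_add]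
    have hcβ : 1 < Real.cosh β := Real.one_lt_cosh.2 (ne_of_lt hβ)
    have hcα : 1 ≤ Real.cosh α := Real.one_le_cosh α
    nlinarith
  -- ε₁ > 0
  have hε₁ : 0 < ε₁ := by
    by_contra h
    push_neg at h
    have hε₂ : ε₂ ≤ α + β := by linarith
    have e1 : waveH ε₁ = Real.sinh ε₁ := wneg ε₁ h
    have e2 : waveH ε₂ = Real.sinh ε₂ := wneg ε₂ (by linarith)
    have m1 : Real.sinh ε₁ ≤ 0 := by
      rw [← Real.sinh_zero]; exact Real.sinh_le_sinh.2 h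
    have m2 : Real.sinh ε₂ ≤ Real.sinh (α + β) := Real.sinh_le_sinh.2 hε₂
    rw [e1, e2, hwα, hwβ] at h2
    linarith
  have e1 : waveH ε₁ = ε₁ := if_pos hε₁.le
  rw [e1, hwα, hwβ] at h2
  -- ε₂ < 0
  have hε₂ : ε₂ < 0 := by
    by_contra h
    push_neg at h
    have : waveH ε₂ = ε₂ := if_pos h
    rw [this] at h2
    linarith
  have e2 : waveH ε₂ = Real.sinh ε₂ := wneg ε₂ hε₂.le
  rw [e2] at h2
  -- ε₂ < α
  have hα2 : ε₂ < α := by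
    by_contra h
    push_neg at h
    have m : Real.sinh α ≤ Real.sinh ε₂ := Real.sinh_le_sinh.2 h
    have : -β ≤ ε₁ := by linarith
    linarith
  -- ε₂ < β
  have hβ2 : ε₂ < β := by
    by_contra h
    push_neg at h
    have m : Real.sinh β ≤ Real.sinh ε₂ := Real.sinh_le_sinh.2 h
    have : -α ≤ ε₁ := by linarith
    linarith
  refine ⟨hε₂, hε₁, ?_, ?_⟩
  · rw [abs_of_neg hα, abs_of_neg hβ, abs_of_neg hε₂]
    exact max_lt (by linarith) (by linarith)
  · rw [abs_of_neg hα, abs_of_neg hβ, abs_of_neg hε₂]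
    linarith
end

section
/- Let q > 0, set c(q) = (cosh q − 1)/(cosh q + 1), and let 1 ≤ ξ ≤ 1/c(q). Define W_ξ : ℝ → ℝ by W_ξ(x) = max(x,0) + ξ·max(−x,0). Let α, β be nonzero real numbers with |α| ≤ q and |β| ≤ q, and assume either (α < 0 and β < 0) or α·β < 0. If ε₁, ε₂ ∈ ℝ satisfy ε₂ − ε₁ = α + β and h(ε₁) + h(ε₂) = h(α) + h(β), then W_ξ(ε₁) + W_ξ(ε₂) + (ξ − 1)·|ε₁| ≤ W_ξ(α) + W_ξ(β). -/
/-- Weighted strength: weight `1` for rarefactions (positive part) and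
weight `ξ` for shocks (negative part). -/
noncomputable def weightedStrength (ξ x : ℝ) : ℝ := max x 0 + ξ * max (-x) 0

/-!
Two shocks of the same family interact into a reflected rarefaction `ε₁ > 0` and a transmitted
shock `ε₂ < 0`; then `ε₁ - ε₂ = -(α + β)` makes the weighted functional, corrected by
`(ξ - 1)|ε₁|`, exactly conserved.

When a rarefaction `α ≥ 0` meets a shock `β ∈ [-q, 0]`, the reflected wave is a shock, because
`x ↦ h x - x` is nondecreasing. Its size is controlled by the trapezoidal bound
`sinh x - sinh y ≤ (x - y) (cosh x + cosh y) / 2`: one gets `4|ε₁| ≤ |β| (cosh q - 1)` if the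
transmitted wave is a rarefaction, and `|ε₁| ≤ c(q) α` if it is a shock. With
`ξ (cosh q - 1) ≤ cosh q + 1`, these bounds pay for the extra weight of the reflected shock.
-/

open Real

namespace Real

theorem cosh_le_cosh_of_abs_le {x y : ℝ} (h : |x| ≤ y) : cosh x ≤ cosh y :=
  cosh_le_cosh.2 (h.trans (le_abs_self y))

theorem sinh_le_mul_cosh {t : ℝ} (ht : 0 ≤ t) : sinh t ≤ t * cosh t := by
  rcases ht.eq_or_lt with rfl | htpos
  · simp
  obtain ⟨s, ⟨hs0, hst⟩, hslope⟩ := exists_hasDerivAt_eq_slope sinh cosh htpos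
    continuous_sinh.continuousOn fun x _ => hasDerivAt_sinh x
  have hcosh : cosh s ≤ cosh t := cosh_le_cosh_of_abs_le (abs_le.2 ⟨by linarith, hst.le⟩)
  rw [hslope, sinh_zero, sub_zero, sub_zero, div_le_iff₀ htpos] at hcosh
  linarith

/-- The trapezoidal rule overestimates `∫ y..x, cosh`, as `cosh` is convex. -/
theorem sinh_sub_sinh_le {x y : ℝ} (h : y ≤ x) :
    sinh x - sinh y ≤ (x - y) * ((cosh x + cosh y) / 2) := by
  set m := (x + y) / 2
  set d := (x - y) / 2
  have hx : x = m + d := by ring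
  have hy : y = m - d := by ring
  have hsinh : sinh x - sinh y = 2 * cosh m * sinh d := by
    rw [hx, hy, sinh_add, sinh_sub]; ring
  have hcosh : cosh x + cosh y = 2 * cosh m * cosh d := by
    rw [hx, hy, cosh_add, cosh_sub]; ring
  have hd : sinh d ≤ d * cosh d := sinh_le_mul_cosh (by linarith)
  rw [hsinh, hcosh, show x - y = 2 * d by ring]
  nlinarith [mul_le_mul_of_nonneg_left hd (cosh_pos m).le]

theorem sinh_sub_self_le {t : ℝ} (ht : 0 ≤ t) : sinh t - t ≤ t * (cosh t - 1) / 2 := by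
  have := sinh_sub_sinh_le ht
  rw [sinh_zero, cosh_zero, sub_zero] at this
  linarith

theorem sinh_add_lt_of_neg {x y : ℝ} (hx : x < 0) (hy : y < 0) :
    sinh (x + y) < sinh x + sinh y := by
  have hsx : sinh x * (cosh y - 1) < 0 :=
    mul_neg_of_neg_of_pos (sinh_neg_iff.2 hx) (by linarith [one_lt_cosh.2 hy.ne])
  have hsy : sinh y * (cosh x - 1) < 0 :=
    mul_neg_of_neg_of_pos (sinh_neg_iff.2 hy) (by linarith [one_lt_cosh.2 hx.ne])
  rw [sinh_add]
  linarith

end Real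

theorem waveH_of_nonneg {x : ℝ} (h : 0 ≤ x) : waveH x = x := if_pos h

theorem waveH_of_nonpos {x : ℝ} (h : x ≤ 0) : waveH x = sinh x := by
  rcases h.eq_or_lt with rfl | hneg
  · simp [waveH]
  · exact if_neg hneg.not_ge

theorem sub_le_waveH_sub_waveH {x y : ℝ} (h : y ≤ x) : x - y ≤ waveH x - waveH y := by
  rcases le_total 0 y with hy | hy
  · rw [waveH_of_nonneg hy, waveH_of_nonneg (hy.trans h)]
  rw [waveH_of_nonpos hy]
  rcases le_total 0 x with hx | hx
  · rw [waveH_of_nonneg hx]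
    linarith [sinh_le_self_iff.2 hy]
  · rw [waveH_of_nonpos hx]
    linarith [sinh_sub_id_strictMono.monotone h]

theorem weightedStrength_of_nonneg {ξ x : ℝ} (h : 0 ≤ x) : weightedStrength ξ x = x := by
  simp [weightedStrength, h]

theorem weightedStrength_of_nonpos {ξ x : ℝ} (h : x ≤ 0) : weightedStrength ξ x = ξ * -x := by
  simp [weightedStrength, h]

section Interaction

variable {q ξ α β ε₁ ε₂ : ℝ}

theorem interaction_signs_of_shock_shock (hα : α < 0) (hβ : β < 0)
    (h1 : ε₂ - ε₁ = α + β) (h2 : waveH ε₁ + waveH ε₂ = waveH α + waveH β) :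
    0 < ε₁ ∧ ε₂ < 0 := by
  rw [waveH_of_nonpos hα.le, waveH_of_nonpos hβ.le] at h2
  have hsum := sinh_add_lt_of_neg hα hβ
  have hε₁ : 0 < ε₁ := by
    by_contra! hε₁
    have hε₂ : ε₂ ≤ α + β := by linarith
    rw [waveH_of_nonpos hε₁, waveH_of_nonpos (by linarith)] at h2
    linarith [sinh_nonpos_iff.2 hε₁, sinh_le_sinh.2 hε₂]
  refine ⟨hε₁, ?_⟩
  by_contra! hε₂
  rw [waveH_of_nonneg hε₁.le, waveH_of_nonneg hε₂] at h2
  linarith [sinh_neg_iff.2 hα, sinh_neg_iff.2 hβ]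

theorem weightedStrength_interaction_eq_of_shock_shock (hα : α < 0) (hβ : β < 0)
    (h1 : ε₂ - ε₁ = α + β) (h2 : waveH ε₁ + waveH ε₂ = waveH α + waveH β) :
    weightedStrength ξ ε₁ + weightedStrength ξ ε₂ + (ξ - 1) * |ε₁| =
      weightedStrength ξ α + weightedStrength ξ β := by
  obtain ⟨hε₁, hε₂⟩ := interaction_signs_of_shock_shock hα hβ h1 h2
  rw [weightedStrength_of_nonneg hε₁.le, weightedStrength_of_nonpos hε₂.le,
    weightedStrength_of_nonpos hα.le, weightedStrength_of_nonpos hβ.le, abs_of_pos hε₁]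
  linear_combination (-ξ) * h1

theorem reflected_nonpos_of_rarefaction (hα : 0 ≤ α)
    (h1 : ε₂ - ε₁ = α + β) (h2 : waveH ε₁ + waveH ε₂ = waveH α + waveH β) : ε₁ ≤ 0 := by
  by_contra! hε₁
  have := sub_le_waveH_sub_waveH (show β ≤ ε₂ by linarith)
  rw [waveH_of_nonneg hε₁.le, waveH_of_nonneg hα] at h2
  linarith

theorem reflected_le_of_transmitted_rarefaction (hα : 0 ≤ α) (hβ : β ≤ 0) (hβq : -q ≤ β)
    (hε₁ : ε₁ ≤ 0) (hε₂ : 0 ≤ ε₂)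
    (h1 : ε₂ - ε₁ = α + β) (h2 : waveH ε₁ + waveH ε₂ = waveH α + waveH β) :
    4 * -ε₁ ≤ -β * (cosh q - 1) := by
  rw [waveH_of_nonpos hε₁, waveH_of_nonneg hε₂, waveH_of_nonneg hα, waveH_of_nonpos hβ] at h2
  have hβ' := sinh_sub_self_le (neg_nonneg.2 hβ)
  rw [sinh_neg, cosh_neg] at hβ'
  have hcosh : cosh β ≤ cosh q := cosh_le_cosh_of_abs_le (abs_le.2 ⟨hβq, by linarith⟩)
  nlinarith [sinh_le_self_iff.2 hε₁, mul_le_mul_of_nonneg_left hcosh (neg_nonneg.2 hβ)]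

theorem reflected_le_of_transmitted_shock (hα : 0 ≤ α) (hβ : β ≤ 0) (hβq : -q ≤ β)
    (hε₁ : ε₁ ≤ 0) (hε₂ : ε₂ ≤ 0)
    (h1 : ε₂ - ε₁ = α + β) (h2 : waveH ε₁ + waveH ε₂ = waveH α + waveH β) :
    -ε₁ * (cosh q + 1) ≤ α * (cosh q - 1) := by
  rw [waveH_of_nonpos hε₁, waveH_of_nonpos hε₂, waveH_of_nonneg hα, waveH_of_nonpos hβ] at h2
  have hsinh₁ : sinh ε₁ ≤ ε₁ := sinh_le_self_iff.2 hε₁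
  have hβε₂ : β ≤ ε₂ := sinh_le_sinh.1 (by linarith [sinh_nonpos_iff.2 hε₁])
  set C := (cosh ε₂ + cosh β) / 2 with hC
  have hC1 : 1 ≤ C := by linarith [one_le_cosh ε₂, one_le_cosh β]
  have hCq : C ≤ cosh q := by
    have hcβ : cosh β ≤ cosh q := cosh_le_cosh_of_abs_le (abs_le.2 ⟨hβq, by linarith⟩)
    have hcε₂ : cosh ε₂ ≤ cosh q := cosh_le_cosh_of_abs_le (abs_le.2 ⟨by linarith, by linarith⟩)
    linarith
  have hαC : -ε₁ * (1 + C) ≤ α * (C - 1) := by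
    have := sinh_sub_sinh_le hβε₂
    rw [show ε₂ - β = α + ε₁ by linarith, ← hC] at this
    linarith
  -- `t ↦ (t - 1) / (t + 1)` is increasing
  nlinarith

theorem weightedStrength_interaction_le_of_rarefaction_shock (hξ1 : 1 ≤ ξ)
    (hξq : ξ * (cosh q - 1) ≤ cosh q + 1) (hα : 0 ≤ α) (hβ : β ≤ 0) (hβq : -q ≤ β)
    (h1 : ε₂ - ε₁ = α + β) (h2 : waveH ε₁ + waveH ε₂ = waveH α + waveH β) :
    weightedStrength ξ ε₁ + weightedStrength ξ ε₂ + (ξ - 1) * |ε₁| ≤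
      weightedStrength ξ α + weightedStrength ξ β := by
  have hε₁ := reflected_nonpos_of_rarefaction hα h1 h2
  rw [weightedStrength_of_nonpos hε₁, weightedStrength_of_nonneg hα,
    weightedStrength_of_nonpos hβ, abs_of_nonpos hε₁]
  rcases le_total 0 ε₂ with hε₂ | hε₂
  · have hrefl := reflected_le_of_transmitted_rarefaction hα hβ hβq hε₁ hε₂ h1 h2
    have hcoef : (ξ - 1) * (cosh q - 1) ≤ 2 := by linarith
    have hdecay : 2 * (ξ - 1) * -ε₁ ≤ (ξ + 1) * -β := by
      nlinarith [mul_le_mul_of_nonneg_left hrefl (by linarith : (0:ℝ) ≤ ξ - 1),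
        mul_le_mul_of_nonneg_left hcoef (neg_nonneg.2 hβ)]
    rw [weightedStrength_of_nonneg hε₂, show ε₂ = ε₁ + α + β by linarith]
    linarith
  · have hrefl := reflected_le_of_transmitted_shock hα hβ hβq hε₁ hε₂ h1 h2
    have hcoef : (3 * ξ - 1) * (cosh q - 1) ≤ (ξ + 1) * (cosh q + 1) := by linarith
    have hK : 0 < cosh q + 1 := by linarith [one_le_cosh q]
    have hdecay : (3 * ξ - 1) * -ε₁ ≤ (ξ + 1) * α := by
      refine le_of_mul_le_mul_right ?_ hK
      nlinarith [mul_le_mul_of_nonneg_left hrefl (by linarith : (0:ℝ) ≤ 3 * ξ - 1),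
        mul_le_mul_of_nonneg_left hcoef hα]
    rw [weightedStrength_of_nonpos hε₂, show ε₂ = ε₁ + α + β by linarith]
    linarith

end Interaction

theorem weighted_functional_decay_general (q ξ α β ε₁ ε₂ : ℝ) (hq : 0 < q)
    (hξ1 : 1 ≤ ξ) (hξ2 : ξ ≤ 1 / ((Real.cosh q - 1) / (Real.cosh q + 1)))
    (hαq : |α| ≤ q) (hβq : |β| ≤ q)
    (hsign : (α < 0 ∧ β < 0) ∨ α * β < 0)
    (h1 : ε₂ - ε₁ = α + β)
    (h2 : waveH ε₁ + waveH ε₂ = waveH α + waveH β) :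
    weightedStrength ξ ε₁ + weightedStrength ξ ε₂ + (ξ - 1) * |ε₁| ≤
      weightedStrength ξ α + weightedStrength ξ β := by
  have hcosh : 0 < cosh q - 1 := sub_pos.2 (one_lt_cosh.2 hq.ne')
  have hξq : ξ * (cosh q - 1) ≤ cosh q + 1 := by rwa [one_div_div, le_div_iff₀ hcosh] at hξ2
  rcases hsign with ⟨hα, hβ⟩ | hαβ
  · exact (weightedStrength_interaction_eq_of_shock_shock hα hβ h1 h2).le
  rcases mul_neg_iff.1 hαβ with ⟨hα, hβ⟩ | ⟨hα, hβ⟩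
  · exact weightedStrength_interaction_le_of_rarefaction_shock hξ1 hξq hα.le hβ.le
      (abs_le.1 hβq).1 h1 h2
  · rw [add_comm (weightedStrength ξ α)]
    exact weightedStrength_interaction_le_of_rarefaction_shock hξ1 hξq hβ.le hα.le
      (abs_le.1 hαq).1 (by linarith) (by linarith)

/-- decay of the weighted functional `L_ξ` across any interaction
of two waves of the same family:
`W_ξ(ε₁) + W_ξ(ε₂) + (ξ−1)|ε₁| ≤ W_ξ(α) + W_ξ(β)` for
`1 ≤ ξ ≤ 1/c(q)`, `c(q) = (cosh q − 1)/(cosh q + 1)`. -/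
theorem weighted_functional_decay (q ξ α β ε₁ ε₂ : ℝ) (hq : 0 < q)
    (hξ1 : 1 ≤ ξ) (hξ2 : ξ ≤ 1 / ((Real.cosh q - 1) / (Real.cosh q + 1)))
    (hα : α ≠ 0) (hβ : β ≠ 0) (hαq : |α| ≤ q) (hβq : |β| ≤ q)
    (hsign : (α < 0 ∧ β < 0) ∨ α * β < 0)
    (h1 : ε₂ - ε₁ = α + β)
    (h2 : waveH ε₁ + waveH ε₂ = waveH α + waveH β) :
    weightedStrength ξ ε₁ + weightedStrength ξ ε₂ + (ξ - 1) * |ε₁| ≤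
      weightedStrength ξ α + weightedStrength ξ β :=
  weighted_functional_decay_general q ξ α β ε₁ ε₂ hq hξ1 hξ2 hαq hβq hsign h1 h2
end
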